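/- arXiv:2008.13010 — 2 statements merged into one kernel-verified Lean document; each statement's English description precedes it below -/
import Mathlib

section
/- Let 𝒞 ⊆ ℝ^{n+m} and 𝒫 ⊆ ℝⁿ be proper C-sets and let A ∈ ℝ^{n×n}, B ∈ ℝ^{n×m}. Define 𝒯⁺ = (𝒞* ⊕ Mᵀ𝒫*)* and 𝒫⁺ = P_x𝒯⁺. Then for every x ∈ ℝⁿ the infimum over u ∈ ℝᵐ of γ(𝒞,(x,u)) + γ(𝒫, Ax+Bu) is attained and equals γ(𝒫⁺, x); in particular the value function V⁺(x) = min_u [γ(𝒞,(x,u)) + γ(𝒫, Ax+Bu)] is the Minkowski function of the proper C-set 𝒫⁺. -/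
open Pointwise Filter Topology Matrix

noncomputable section

/-- ℝⁿ with the standard (Euclidean) inner product. -/
abbrev Rsp (n : ℕ) := EuclideanSpace ℝ (Fin n)

/-- ℝ^{n+m} realized as the L²-product ℝⁿ × ℝᵐ. -/
abbrev Rsp2 (n m : ℕ) := WithLp 2 (Rsp n × Rsp m)

/-- A C-set: compact, convex, containing the origin. -/
def IsCSet {E : Type*} [NormedAddCommGroup E] [NormedSpace ℝ E] (X : Set E) : Prop :=
  IsCompact X ∧ Convex ℝ X ∧ (0 : E) ∈ X

/-- A proper C-set: a C-set containing the origin in its interior. -/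
def IsProperCSet {E : Type*} [NormedAddCommGroup E] [NormedSpace ℝ E] (X : Set E) : Prop :=
  IsCSet X ∧ (0 : E) ∈ interior X

/-- The polar set 𝒳* = {y : ⟨y,x⟩ ≤ 1 for all x ∈ 𝒳}. -/
def polarSet {E : Type*} [NormedAddCommGroup E] [InnerProductSpace ℝ E] (X : Set E) : Set E :=
  {y | ∀ x ∈ X, inner ℝ y x ≤ (1 : ℝ)}

/-- The Minkowski (gauge) function γ(𝒳,y) = inf{η ≥ 0 : y ∈ η𝒳}. -/
def mgauge {E : Type*} [NormedAddCommGroup E] [NormedSpace ℝ E] (X : Set E) (y : E) : ℝ :=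
  sInf {η : ℝ | 0 ≤ η ∧ y ∈ η • X}

variable {n m : ℕ}

/-- The map M = (A B) : ℝ^{n+m} → ℝⁿ, M(x,u) = Ax + Bu. -/
def Mfwd (A : Matrix (Fin n) (Fin n) ℝ) (B : Matrix (Fin n) (Fin m) ℝ) (w : Rsp2 n m) : Rsp n :=
  Matrix.toEuclideanLin A w.ofLp.1 + Matrix.toEuclideanLin B w.ofLp.2

/-- The transpose map Mᵀ : ℝⁿ → ℝ^{n+m}, Mᵀp = (Aᵀp, Bᵀp). -/
def Mtr (A : Matrix (Fin n) (Fin n) ℝ) (B : Matrix (Fin n) (Fin m) ℝ) (p : Rsp n) : Rsp2 n m :=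
  WithLp.toLp 2 (Matrix.toEuclideanLin Aᵀ p, Matrix.toEuclideanLin Bᵀ p)

/-- The projection P_x : ℝ^{n+m} → ℝⁿ, (x,u) ↦ x. -/
def Pxproj : Rsp2 n m → Rsp n := fun w => w.ofLp.1

/-!
By duality, the gauge of a proper C-set `X` is the support function `σ` of its polar `X*`; more
precisely, the polar `D*` of a compact neighbourhood `D` of `0` has gauge `σ_D`, and this infimum
is attained. Support functions add under `⊕` and transform by adjoints, so
`γ(𝒯⁺, w) = σ_{𝒞*}(w) + σ_{𝒫*}(Mw) = γ(𝒞, w) + γ(𝒫, Mw)`. Minimising this over `u` for fixed `x`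
gives the gauge of the projection `P_x 𝒯⁺`, and the minimum is attained because the gauge of the
proper C-set `𝒯⁺` is.
-/

open scoped RealInnerProductSpace

section Gauge

variable {E F : Type*} [NormedAddCommGroup E] [NormedSpace ℝ E]
  [NormedAddCommGroup F] [NormedSpace ℝ F]

theorem mgauge_nonneg (X : Set E) (y : E) : 0 ≤ mgauge X y :=
  Real.sInf_nonneg fun _ h => h.1

theorem mgauge_le_of_mem_smul {X : Set E} {y : E} {η : ℝ} (hη : 0 ≤ η) (hy : y ∈ η • X) :
    mgauge X y ≤ η :=
  csInf_le ⟨0, fun _ h => h.1⟩ ⟨hη, hy⟩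

theorem IsProperCSet.image [CompleteSpace E] [CompleteSpace F] {T : Set F}
    (hT : IsProperCSet T) (f : F →L[ℝ] E) (hf : Function.Surjective f) :
    IsProperCSet (f '' T) := by
  refine ⟨⟨hT.1.1.image f.continuous, hT.1.2.1.linear_image f.toLinearMap,
    ⟨0, hT.1.2.2, map_zero f⟩⟩, ?_⟩
  rw [mem_interior_iff_mem_nhds, ← map_zero f]
  exact (f.isOpenMap hf).image_mem_nhds (mem_interior_iff_mem_nhds.mp hT.2)

end Gauge

section PolarDuality

variable {E : Type*} [NormedAddCommGroup E] [InnerProductSpace ℝ E]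

theorem zero_mem_polarSet (X : Set E) : (0 : E) ∈ polarSet X :=
  fun x _ => by simp

theorem isClosed_polarSet (X : Set E) : IsClosed (polarSet X) := by
  simp only [polarSet, Set.ofPred_forall]
  exact isClosed_biInter fun x _ =>
    isClosed_le (continuous_id.inner continuous_const) continuous_const

theorem convex_polarSet (X : Set E) : Convex ℝ (polarSet X) := by
  intro y hy z hz a b ha hb hab x hx
  rw [inner_add_left, real_inner_smul_left, real_inner_smul_left]
  nlinarith [hy x hx, hz x hx]

theorem isBounded_polarSet {X : Set E} (hX : X ∈ 𝓝 0) : Bornology.IsBounded (polarSet X) := by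
  obtain ⟨ε, hε, hεX⟩ := Metric.nhds_basis_closedBall.mem_iff.mp hX
  refine Metric.isBounded_closedBall (x := 0) (r := ε⁻¹) |>.subset fun p hp => ?_
  rw [mem_closedBall_zero_iff, inv_eq_one_div, le_div_iff₀ hε]
  rcases eq_or_ne p 0 with rfl | hp0
  · simp
  have hpn : 0 < ‖p‖ := norm_pos_iff.mpr hp0
  have h := hp ((ε / ‖p‖) • p) <| hεX <| by
    rw [mem_closedBall_zero_iff, norm_smul, Real.norm_of_nonneg (by positivity),
      div_mul_cancel₀ ε hpn.ne']
  rw [real_inner_smul_right, real_inner_self_eq_norm_sq] at h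
  calc ‖p‖ * ε = ε / ‖p‖ * ‖p‖ ^ 2 := by field_simp
    _ ≤ 1 := h

theorem polarSet_mem_nhds_zero {X : Set E} (hX : Bornology.IsBounded X) : polarSet X ∈ 𝓝 0 := by
  obtain ⟨R, hR, hXR⟩ := hX.subset_closedBall_lt 0 0
  refine Metric.mem_nhds_iff.mpr ⟨R⁻¹, inv_pos.mpr hR, fun p hp x hx => ?_⟩
  calc ⟪p, x⟫ ≤ ‖p‖ * ‖x‖ := real_inner_le_norm p x
    _ ≤ R⁻¹ * R := mul_le_mul (mem_ball_zero_iff.mp hp).le (mem_closedBall_zero_iff.mp (hXR hx))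
        (norm_nonneg x) (inv_pos.mpr hR).le
    _ = 1 := inv_mul_cancel₀ hR.ne'

theorem isCompact_polarSet [ProperSpace E] {X : Set E} (hX : X ∈ 𝓝 0) :
    IsCompact (polarSet X) :=
  Metric.isCompact_of_isClosed_isBounded (isClosed_polarSet X) (isBounded_polarSet hX)

theorem isProperCSet_polarSet [ProperSpace E] {X : Set E} (hX : X ∈ 𝓝 0)
    (hXb : Bornology.IsBounded X) : IsProperCSet (polarSet X) :=
  ⟨⟨isCompact_polarSet hX, convex_polarSet X, zero_mem_polarSet X⟩,
    mem_interior_iff_mem_nhds.mpr (polarSet_mem_nhds_zero hXb)⟩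

theorem mem_smul_polarSet_iff {S : Set E} {η : ℝ} (hη : 0 < η) {y : E} :
    y ∈ η • polarSet S ↔ ∀ p ∈ S, ⟪y, p⟫ ≤ η := by
  rw [Set.mem_smul_set_iff_inv_smul_mem₀ hη.ne']
  refine forall₂_congr fun p _ => ?_
  rw [real_inner_smul_left, inv_mul_le_iff₀ hη, mul_one]

theorem polarSet_polarSet [CompleteSpace E] {X : Set E} (hXc : IsClosed X) (hXv : Convex ℝ X)
    (hX0 : (0 : E) ∈ X) : polarSet (polarSet X) = X := by
  refine Set.Subset.antisymm (fun y hy => ?_) fun x hx p hp => real_inner_comm p x ▸ hp x hx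
  by_contra hyX
  obtain ⟨f, u, hfX, hfy⟩ := geometric_hahn_banach_closed_point hXv hXc hyX
  have hu : 0 < u := by simpa using hfX 0 hX0
  set p := u⁻¹ • (InnerProductSpace.toDual ℝ E).symm f
  have hp : ∀ z, ⟪z, p⟫ = u⁻¹ * f z := fun z => by
    rw [real_inner_comm, real_inner_smul_left, InnerProductSpace.toDual_symm_apply]
  have hpX : p ∈ polarSet X := fun x hx => by
    rw [real_inner_comm, hp, inv_mul_le_iff₀ hu, mul_one]
    exact (hfX x hx).le
  have := hy p hpX
  rw [hp, inv_mul_le_iff₀ hu, mul_one] at this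
  exact this.not_gt hfy

end PolarDuality

section SupportFunction

variable {E F : Type*} [NormedAddCommGroup E] [InnerProductSpace ℝ E]
  [NormedAddCommGroup F] [InnerProductSpace ℝ F]

def supportFun (D : Set E) (y : E) : ℝ :=
  sSup (innerSL ℝ y '' D)

theorem IsCompact.bddAbove_innerSL_image {D : Set E} (hD : IsCompact D) (y : E) :
    BddAbove (innerSL ℝ y '' D) :=
  (hD.image (innerSL ℝ y).continuous).bddAbove

theorem inner_le_supportFun {D : Set E} (hD : IsCompact D) {p : E} (hp : p ∈ D) (y : E) :
    ⟪y, p⟫ ≤ supportFun D y :=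
  le_csSup (hD.bddAbove_innerSL_image y) ⟨p, hp, rfl⟩

theorem supportFun_le_iff {D : Set E} (hD : IsCompact D) (hDne : D.Nonempty) {y : E} {η : ℝ} :
    supportFun D y ≤ η ↔ ∀ p ∈ D, ⟪y, p⟫ ≤ η := by
  rw [supportFun, csSup_le_iff (hD.bddAbove_innerSL_image y) (hDne.image _), Set.forall_mem_image]
  rfl

theorem supportFun_add {S T : Set E} (hS : IsCompact S) (hT : IsCompact T) (hSne : S.Nonempty)
    (hTne : T.Nonempty) (y : E) :
    supportFun (S + T) y = supportFun S y + supportFun T y := by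
  rw [supportFun, Set.image_add, csSup_add (hSne.image _) (hS.bddAbove_innerSL_image y)
    (hTne.image _) (hT.bddAbove_innerSL_image y)]
  rfl

theorem supportFun_image {L : F → E} {Lt : E → F} (hadj : ∀ w q, ⟪L w, q⟫ = ⟪w, Lt q⟫)
    (D : Set E) (w : F) : supportFun (Lt '' D) w = supportFun D (L w) := by
  rw [supportFun, supportFun, Set.image_image]
  exact congrArg sSup (Set.image_congr fun q _ => by simp [hadj])

end SupportFunction

section GaugeOfPolar

variable {E F : Type*} [NormedAddCommGroup E] [InnerProductSpace ℝ E]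
  [NormedAddCommGroup F] [InnerProductSpace ℝ F]

theorem eq_zero_of_supportFun_nonpos {D : Set E} (hD : IsCompact D) (hD0 : D ∈ 𝓝 0) {y : E}
    (hy : supportFun D y ≤ 0) : y = 0 := by
  have hlim : Tendsto (fun t : ℝ => t • y) (𝓝[>] 0) (𝓝 0) := by
    rw [← zero_smul ℝ y]
    exact (tendsto_id.mono_left nhdsWithin_le_nhds).smul_const y
  obtain ⟨t, htD, ht⟩ := ((hlim.eventually hD0).and self_mem_nhdsWithin).exists
  have h := (inner_le_supportFun hD htD y).trans hy
  rw [real_inner_smul_right, real_inner_self_eq_norm_sq] at h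
  simpa using nonpos_of_mul_nonpos_right h ht

theorem setOf_mem_smul_polarSet {D : Set E} (hD : IsCompact D) (hD0 : D ∈ 𝓝 0) (y : E) :
    {η : ℝ | 0 ≤ η ∧ y ∈ η • polarSet D} = Set.Ici (supportFun D y) := by
  have hDne : D.Nonempty := ⟨0, mem_of_mem_nhds hD0⟩
  have hσ : 0 ≤ supportFun D y := by simpa using inner_le_supportFun hD (mem_of_mem_nhds hD0) y
  ext η
  rcases lt_trichotomy η 0 with hη | rfl | hη
  · simp only [Set.mem_ofPred_eq, Set.mem_Ici, hη.not_ge, false_and, false_iff, not_le]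
    linarith
  · simp only [Set.mem_ofPred_eq, le_refl, true_and, Set.zero_smul_set ⟨0, zero_mem_polarSet D⟩,
      Set.mem_zero, Set.mem_Ici]
    refine ⟨fun hy => (supportFun_le_iff hD hDne).mpr fun p _ => by simp [hy],
      eq_zero_of_supportFun_nonpos hD hD0⟩
  · simp only [Set.mem_ofPred_eq, Set.mem_Ici, hη.le, true_and, mem_smul_polarSet_iff hη,
      supportFun_le_iff hD hDne]

theorem mgauge_polarSet {D : Set E} (hD : IsCompact D) (hD0 : D ∈ 𝓝 0) (y : E) :
    mgauge (polarSet D) y = supportFun D y := by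
  rw [mgauge, setOf_mem_smul_polarSet hD hD0, csInf_Ici]

theorem mem_mgauge_smul_polarSet {D : Set E} (hD : IsCompact D) (hD0 : D ∈ 𝓝 0) (y : E) :
    y ∈ mgauge (polarSet D) y • polarSet D := by
  have h : mgauge (polarSet D) y ∈ {η : ℝ | 0 ≤ η ∧ y ∈ η • polarSet D} := by
    rw [setOf_mem_smul_polarSet hD hD0, mgauge_polarSet hD hD0]
    exact Set.self_mem_Ici
  exact h.2

theorem IsProperCSet.polarSet_polarSet [ProperSpace E] {X : Set E} (hX : IsProperCSet X) :
    polarSet (polarSet X) = X :=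
  _root_.polarSet_polarSet hX.1.1.isClosed hX.1.2.1 hX.1.2.2

theorem IsProperCSet.isCompact_polarSet [ProperSpace E] {X : Set E} (hX : IsProperCSet X) :
    IsCompact (polarSet X) :=
  _root_.isCompact_polarSet (mem_interior_iff_mem_nhds.mp hX.2)

theorem IsProperCSet.polarSet_mem_nhds_zero {X : Set E} (hX : IsProperCSet X) :
    polarSet X ∈ 𝓝 0 :=
  _root_.polarSet_mem_nhds_zero hX.1.1.isBounded

theorem IsProperCSet.mgauge_eq_supportFun [ProperSpace E] {X : Set E} (hX : IsProperCSet X)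
    (y : E) : mgauge X y = supportFun (polarSet X) y := by
  simpa only [hX.polarSet_polarSet] using
    mgauge_polarSet hX.isCompact_polarSet hX.polarSet_mem_nhds_zero y

theorem IsProperCSet.mem_mgauge_smul [ProperSpace E] {X : Set E} (hX : IsProperCSet X) (y : E) :
    y ∈ mgauge X y • X := by
  simpa only [hX.polarSet_polarSet] using
    mem_mgauge_smul_polarSet hX.isCompact_polarSet hX.polarSet_mem_nhds_zero y

theorem mgauge_image_le [ProperSpace F] {T : Set F} (hT : IsProperCSet T) (f : F →L[ℝ] E)
    (w : F) : mgauge (f '' T) (f w) ≤ mgauge T w := by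
  refine mgauge_le_of_mem_smul (mgauge_nonneg T w) ?_
  obtain ⟨t, ht, hwt⟩ := hT.mem_mgauge_smul w
  exact ⟨f t, Set.mem_image_of_mem f ht, (map_smul f _ t).symm.trans (congrArg f hwt)⟩

theorem exists_mgauge_le_of_image [ProperSpace E] {T : Set F} (f : F →L[ℝ] E)
    (hT : IsProperCSet (f '' T)) (x : E) : ∃ w, f w = x ∧ mgauge T w ≤ mgauge (f '' T) x := by
  obtain ⟨_, ⟨t, ht, rfl⟩, hx⟩ := hT.mem_mgauge_smul x
  exact ⟨mgauge (f '' T) x • t, by rw [map_smul]; exact hx,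
    mgauge_le_of_mem_smul (mgauge_nonneg _ _) (Set.smul_mem_smul_set ht)⟩

variable {C : Set F} {P : Set E} {L : F → E} {Lt : E → F}

theorem isCompact_polarSet_add_image [ProperSpace E] [ProperSpace F] (hC : IsProperCSet C)
    (hP : IsProperCSet P) (hLt : Continuous Lt) : IsCompact (polarSet C + Lt '' polarSet P) :=
  hC.isCompact_polarSet.add (hP.isCompact_polarSet.image hLt)

theorem polarSet_add_image_mem_nhds_zero (hC : IsProperCSet C)
    (hadj : ∀ w q, ⟪L w, q⟫ = ⟪w, Lt q⟫) : polarSet C + Lt '' polarSet P ∈ 𝓝 0 := by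
  have hLt0 : Lt 0 = 0 := inner_self_eq_zero (𝕜 := ℝ) |>.mp <| by rw [← hadj, inner_zero_right]
  exact mem_of_superset hC.polarSet_mem_nhds_zero
    (Set.subset_add_left _ ⟨0, zero_mem_polarSet P, hLt0⟩)

theorem mgauge_polarSet_add_image [ProperSpace E] [ProperSpace F] (hC : IsProperCSet C)
    (hP : IsProperCSet P) (hLt : Continuous Lt) (hadj : ∀ w q, ⟪L w, q⟫ = ⟪w, Lt q⟫) (w : F) :
    mgauge (polarSet (polarSet C + Lt '' polarSet P)) w = mgauge C w + mgauge P (L w) := by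
  rw [mgauge_polarSet (isCompact_polarSet_add_image hC hP hLt)
      (polarSet_add_image_mem_nhds_zero hC hadj),
    supportFun_add hC.isCompact_polarSet (hP.isCompact_polarSet.image hLt)
      ⟨0, zero_mem_polarSet C⟩ (Set.image_nonempty.mpr ⟨0, zero_mem_polarSet P⟩),
    supportFun_image hadj, hC.mgauge_eq_supportFun, hP.mgauge_eq_supportFun]

end GaugeOfPolar

theorem inner_Mfwd (A : Matrix (Fin n) (Fin n) ℝ) (B : Matrix (Fin n) (Fin m) ℝ)
    (w : Rsp2 n m) (q : Rsp n) : ⟪Mfwd A B w, q⟫ = ⟪w, Mtr A B q⟫ := by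
  rw [Mfwd, Mtr, WithLp.prod_inner_apply, inner_add_left, ← conjTranspose_eq_transpose_of_trivial,
    ← conjTranspose_eq_transpose_of_trivial, toEuclideanLin_conjTranspose_eq_adjoint,
    toEuclideanLin_conjTranspose_eq_adjoint, LinearMap.adjoint_inner_right,
    LinearMap.adjoint_inner_right]

theorem continuous_Mtr (A : Matrix (Fin n) (Fin n) ℝ) (B : Matrix (Fin n) (Fin m) ℝ) :
    Continuous (Mtr A B) := by
  unfold Mtr
  fun_prop

/-- for every x the infimum over u of γ(𝒞,(x,u)) + γ(𝒫, Ax+Bu) is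
attained and equals γ(𝒫⁺, x), where 𝒫⁺ = P_x(𝒞* ⊕ Mᵀ𝒫*)*. -/
theorem stmt_2 (n m : ℕ) (C : Set (Rsp2 n m)) (P : Set (Rsp n))
    (hC : IsProperCSet C) (hP : IsProperCSet P)
    (A : Matrix (Fin n) (Fin n) ℝ) (B : Matrix (Fin n) (Fin m) ℝ)
    (Tplus : Set (Rsp2 n m)) (hT : Tplus = polarSet (polarSet C + Mtr A B '' polarSet P))
    (Pplus : Set (Rsp n)) (hPp : Pplus = Pxproj '' Tplus) :
    ∀ x : Rsp n, ∃ u : Rsp m,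
      mgauge C (WithLp.toLp 2 (x, u) : Rsp2 n m) + mgauge P (Mfwd A B (WithLp.toLp 2 (x, u))) = mgauge Pplus x ∧
      ∀ v : Rsp m,
        mgauge Pplus x ≤ mgauge C (WithLp.toLp 2 (x, v) : Rsp2 n m) + mgauge P (Mfwd A B (WithLp.toLp 2 (x, v))) := by
  subst hT hPp
  have hTplus : IsProperCSet (polarSet (polarSet C + Mtr A B '' polarSet P)) :=
    isProperCSet_polarSet (polarSet_add_image_mem_nhds_zero hC (inner_Mfwd A B))
      (isCompact_polarSet_add_image hC hP (continuous_Mtr A B)).isBounded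
  have hval := mgauge_polarSet_add_image hC hP (continuous_Mtr A B) (inner_Mfwd A B)
  have hPx : (Pxproj : Rsp2 n m → Rsp n) = WithLp.fstL 2 ℝ (Rsp n) (Rsp m) := rfl
  have hPplus :=
    hTplus.image (WithLp.fstL 2 ℝ (Rsp n) (Rsp m)) fun x => ⟨WithLp.toLp 2 (x, 0), rfl⟩
  rw [hPx]
  intro x
  obtain ⟨w, rfl, hw⟩ := exists_mgauge_le_of_image _ hPplus x
  refine ⟨w.snd, le_antisymm ?_ ?_, fun v => ?_⟩
  · rw [← hval]
    exact hw
  · rw [← hval]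
    exact mgauge_image_le hTplus _ _
  · rw [← hval]
    exact mgauge_image_le hTplus _ (WithLp.toLp 2 (w.fst, v))
end
end

section
/- Let A ∈ ℝ^{n×n} and B ∈ ℝ^{n×m} be such that there exists K ∈ ℝ^{m×n} with (A+BK)^k → 0 as k → ∞, and let 𝒞 ⊆ ℝ^{n+m} be a proper C-set. Then there exists a proper C-set ℒ ⊆ ℝⁿ verifying the control Lyapunov decrease condition: for every x ∈ ℝⁿ there exists u ∈ ℝᵐ such that γ(ℒ, Ax+Bu) + γ(𝒞, (x,u)) ≤ γ(ℒ, x). -/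
/-!
Close the loop with the stabilizing gain `K`: for `T = A + BK` some power satisfies
`‖T ^ N‖ < 1`. The seminorm `p x = ∑ k < N, ‖T ^ k x‖` dominates `‖x‖` and telescopes along the
closed loop, `p (T x) = p x - ‖x‖ + ‖T ^ N x‖ ≤ p x - (1 - ‖T ^ N‖) ‖x‖`. Its closed unit balls are
proper C-sets whose gauge is the seminorm itself. Since `𝒞` contains a ball, `γ(𝒞, (x, Kx)) ≤ c ‖x‖`,
and the ball of `p` rescaled so that its decrease is `c ‖x‖` satisfies the decrease condition
with `u = Kx`.
-/

open Pointwise Filter Topology Matrix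

noncomputable section

variable {n m : ℕ}

section Gauge

variable {E : Type*} [NormedAddCommGroup E] [NormedSpace ℝ E]

theorem mgauge_eq_gauge (X : Set E) : mgauge X = gauge X := by
  ext y
  rcases eq_or_ne y 0 with rfl | hy
  · rw [gauge_zero]
    rcases X.eq_empty_or_nonempty with rfl | ⟨z, hz⟩
    · simp [mgauge]
    · refine le_antisymm (csInf_le ⟨0, fun _ h => h.1⟩ ⟨le_rfl, z, hz, zero_smul ℝ z⟩) ?_
      exact le_csInf ⟨0, le_rfl, z, hz, zero_smul ℝ z⟩ fun _ h => h.1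
  · -- `0 • X ⊆ {0}`, so away from the origin `η = 0` is never admissible
    unfold mgauge
    rw [gauge_def]
    congr 1
    ext η
    refine ⟨fun ⟨hη, hmem⟩ => ⟨hη.lt_of_ne ?_, hmem⟩, fun ⟨hη, hmem⟩ => ⟨hη.le, hmem⟩⟩
    rintro rfl
    obtain ⟨z, -, rfl⟩ := hmem
    exact hy (zero_smul ℝ z)

theorem gauge_le_norm_div_of_ball_subset {C : Set E} {ε : ℝ} (hε : 0 < ε)
    (hC : Metric.ball 0 ε ⊆ C) (x : E) : gauge C x ≤ ‖x‖ / ε :=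
  (gauge_ball hε.le x) ▸ gauge_mono (absorbent_ball_zero hε) hC x

theorem Seminorm.gauge_closedBall (p : Seminorm ℝ E) : gauge (p.closedBall 0 1) = p := by
  ext x
  refine le_antisymm ?_ (le_of_forall_lt_imp_le_of_dense fun a ha => ?_)
  · exact p.gauge_ball ▸
      gauge_mono (p.absorbent_ball_zero one_pos) (p.ball_subset_closedBall 0 1) x
  rcases lt_or_ge a 0 with ha0 | ha0
  · exact ha0.le.trans (gauge_nonneg x)
  refine le_gauge_of_notMem
    ((p.convex_closedBall 0 1).starConvex (p.mem_closedBall_self zero_le_one))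
    (p.absorbent_closedBall_zero one_pos).absorbs ?_
  rintro ⟨y, hy, rfl⟩
  rw [p.mem_closedBall_zero] at hy
  rw [map_smul_eq_mul, Real.norm_of_nonneg ha0] at ha
  nlinarith

theorem Seminorm.isProperCSet_closedBall [ProperSpace E] (p : Seminorm ℝ E) (hp : Continuous p)
    (hnorm : ∀ x, ‖x‖ ≤ p x) {r : ℝ} (hr : 0 < r) : IsProperCSet (p.closedBall 0 r) := by
  refine ⟨⟨?_, p.convex_closedBall 0 r, p.mem_closedBall_self hr.le⟩, ?_⟩
  · refine Metric.isCompact_of_isClosed_isBounded ?_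
      ((Metric.isBounded_closedBall (x := 0) (r := r)).subset ?_)
    · rw [p.closedBall_zero_eq]; exact isClosed_le hp continuous_const
    · intro x hx
      rw [p.mem_closedBall_zero] at hx
      simpa using (hnorm x).trans hx
  · exact mem_interior_iff_mem_nhds.mpr
      (mem_of_superset (p.ball_mem_nhds hp hr) (p.ball_subset_closedBall 0 r))

end Gauge

section Orbit

variable {E : Type*} [NormedAddCommGroup E] [NormedSpace ℝ E] (T : E →L[ℝ] E) (N : ℕ)

def orbitSeminorm : Seminorm ℝ E :=
  ∑ k ∈ Finset.range N, (normSeminorm ℝ E).comp ((T ^ k : E →L[ℝ] E) : E →ₗ[ℝ] E)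

theorem orbitSeminorm_apply (x : E) :
    orbitSeminorm T N x = ∑ k ∈ Finset.range N, ‖(T ^ k) x‖ := by
  simp only [orbitSeminorm, _root_.sum_apply, Seminorm.comp_apply, coe_normSeminorm,
    ContinuousLinearMap.coe_coe]

theorem continuous_orbitSeminorm : Continuous (orbitSeminorm T N) :=
  Seminorm.continuous_finsetSum fun k _ => continuous_norm.comp (T ^ k).continuous

variable {N} in
theorem norm_le_orbitSeminorm (hN : N ≠ 0) (x : E) : ‖x‖ ≤ orbitSeminorm T N x := by
  rw [orbitSeminorm_apply]
  simpa using Finset.single_le_sum (f := fun k => ‖(T ^ k) x‖) (fun _ _ => norm_nonneg _)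
    (Finset.mem_range.2 (Nat.pos_of_ne_zero hN))

theorem orbitSeminorm_apply_apply (x : E) :
    orbitSeminorm T N (T x) = orbitSeminorm T N x - ‖x‖ + ‖(T ^ N) x‖ := by
  have hshift (k : ℕ) : (T ^ k) (T x) = (T ^ (k + 1)) x := by rw [pow_succ, mul_apply_eq_comp]
  have hsum := Finset.sum_range_succ' (fun k => ‖(T ^ k) x‖) N
  rw [Finset.sum_range_succ, pow_zero, one_apply_eq_self] at hsum
  simp only [orbitSeminorm_apply, hshift]
  linarith

theorem orbitSeminorm_apply_apply_add_le (x : E) :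
    orbitSeminorm T N (T x) + (1 - ‖T ^ N‖) * ‖x‖ ≤ orbitSeminorm T N x := by
  rw [orbitSeminorm_apply_apply]
  linarith [(T ^ N).le_opNorm x]

end Orbit

theorem exists_isProperCSet_gauge_apply_add_le {E : Type*} [NormedAddCommGroup E]
    [NormedSpace ℝ E] [FiniteDimensional ℝ E] (T : E →L[ℝ] E)
    (hT : Tendsto (fun k : ℕ => T ^ k) atTop (𝓝 0)) {c : ℝ} (hc : 0 < c) :
    ∃ L : Set E, IsProperCSet L ∧ ∀ x, gauge L (T x) + c * ‖x‖ ≤ gauge L x := by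
  have hnorm : Tendsto (fun k => ‖T ^ k‖) atTop (𝓝 0) := by simpa using hT.norm
  obtain ⟨N, hN, hTN⟩ : ∃ N, N ≠ 0 ∧ ‖T ^ N‖ < 1 :=
    ((eventually_ne_atTop 0).and (hnorm.eventually_lt_const zero_lt_one)).exists
  have hq : 0 < 1 - ‖T ^ N‖ := sub_pos.2 hTN
  -- scaled so that the decrease `β * (1 - ‖T ^ N‖) * ‖x‖` of `β • p` is exactly `c * ‖x‖`
  let β : NNReal := ⟨c / (1 - ‖T ^ N‖), by positivity⟩
  have hβ : 0 < β := by change (0 : ℝ) < c / (1 - ‖T ^ N‖); positivity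
  refine ⟨(β • orbitSeminorm T N).closedBall 0 1, ?_, fun x => ?_⟩
  · rw [Seminorm.closedBall_smul _ hβ]
    exact (orbitSeminorm T N).isProperCSet_closedBall (continuous_orbitSeminorm T N)
      (norm_le_orbitSeminorm T hN) (by positivity)
  · rw [Seminorm.gauge_closedBall]
    change c / (1 - ‖T ^ N‖) * _ + c * ‖x‖ ≤ c / (1 - ‖T ^ N‖) * _
    calc c / (1 - ‖T ^ N‖) * orbitSeminorm T N (T x) + c * ‖x‖
        = c / (1 - ‖T ^ N‖) * (orbitSeminorm T N (T x) + (1 - ‖T ^ N‖) * ‖x‖) := by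
          field_simp
      _ ≤ c / (1 - ‖T ^ N‖) * orbitSeminorm T N x := by
          gcongr; exact orbitSeminorm_apply_apply_add_le T N x

theorem WithLp.prod_norm_toLp_le_add {p : ENNReal} [Fact (1 ≤ p)] {α β : Type*}
    [SeminormedAddCommGroup α] [SeminormedAddCommGroup β] (a : α) (b : β) :
    ‖WithLp.toLp p (a, b)‖ ≤ ‖a‖ + ‖b‖ := by
  calc ‖WithLp.toLp p (a, b)‖ = ‖WithLp.toLp p (a, 0) + WithLp.toLp p (0, b)‖ := by
        rw [← WithLp.toLp_add, Prod.mk_add_mk, add_zero, zero_add]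
    _ ≤ ‖a‖ + ‖b‖ := (norm_add_le _ _).trans_eq (by rw [norm_toLp_fst, norm_toLp_snd])

theorem Matrix.tendsto_toEuclideanCLM_pow {ι : Type*} [Fintype ι] [DecidableEq ι]
    {M : Matrix ι ι ℝ} (hM : Tendsto (fun k : ℕ => M ^ k) atTop (𝓝 0)) :
    Tendsto (fun k : ℕ => Matrix.toEuclideanCLM (n := ι) (𝕜 := ℝ) M ^ k) atTop (𝓝 0) := by
  have hcont : Continuous (Matrix.toEuclideanCLM (n := ι) (𝕜 := ℝ)) :=
    LinearMap.continuous_of_finiteDimensional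
      (Matrix.toEuclideanCLM (n := ι) (𝕜 := ℝ)).toAlgEquiv.toLinearMap
  simpa only [Function.comp_def, map_pow, map_zero] using (hcont.tendsto 0).comp hM

theorem Mfwd_toLp_toEuclideanLin (A : Matrix (Fin n) (Fin n) ℝ) (B : Matrix (Fin n) (Fin m) ℝ)
    (K : Matrix (Fin m) (Fin n) ℝ) (x : Rsp n) :
    Mfwd A B (WithLp.toLp 2 (x, Matrix.toEuclideanLin K x)) =
      Matrix.toEuclideanCLM (n := Fin n) (𝕜 := ℝ) (A + B * K) x := by
  rw [← ContinuousLinearMap.coe_coe, Matrix.coe_toEuclideanCLM_eq_toEuclideanLin]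
  simp only [Mfwd, map_add, Matrix.toLpLin_mul_same, LinearMap.add_apply, LinearMap.coe_comp,
    Function.comp_apply]

/-- under strict stabilizability there exists a proper C-set ℒ
verifying the control Lyapunov decrease condition. -/
theorem stmt_6 (n m : ℕ) (A : Matrix (Fin n) (Fin n) ℝ) (B : Matrix (Fin n) (Fin m) ℝ)
    (hstab : ∃ K : Matrix (Fin m) (Fin n) ℝ,
      Tendsto (fun k : ℕ => (A + B * K) ^ k) atTop (nhds 0))
    (C : Set (Rsp2 n m)) (hC : IsProperCSet C) :
    ∃ L : Set (Rsp n), IsProperCSet L ∧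
      ∀ x : Rsp n, ∃ u : Rsp m,
        mgauge L (Mfwd A B (WithLp.toLp 2 (x, u))) + mgauge C (WithLp.toLp 2 (x, u) : Rsp2 n m) ≤ mgauge L x := by
  obtain ⟨K, hK⟩ := hstab
  obtain ⟨ε, hε, hball⟩ := Metric.mem_nhds_iff.mp (mem_interior_iff_mem_nhds.mp hC.2)
  let Kc : Rsp n →L[ℝ] Rsp m := LinearMap.toContinuousLinearMap (Matrix.toEuclideanLin K)
  obtain ⟨L, hL, hdecrease⟩ := exists_isProperCSet_gauge_apply_add_le _
    (Matrix.tendsto_toEuclideanCLM_pow hK) (c := (1 + ‖Kc‖) / ε) (by positivity)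
  refine ⟨L, hL, fun x => ⟨Kc x, ?_⟩⟩
  have hgaugeC : gauge C (WithLp.toLp 2 (x, Kc x)) ≤ (1 + ‖Kc‖) / ε * ‖x‖ :=
    calc gauge C (WithLp.toLp 2 (x, Kc x)) ≤ ‖WithLp.toLp 2 (x, Kc x)‖ / ε :=
          gauge_le_norm_div_of_ball_subset hε hball _
      _ ≤ (‖x‖ + ‖Kc x‖) / ε := by gcongr; exact WithLp.prod_norm_toLp_le_add x (Kc x)
      _ ≤ (1 + ‖Kc‖) / ε * ‖x‖ := by
          rw [div_mul_eq_mul_div]; gcongr; linarith [Kc.le_opNorm x]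
  have hclosed : Mfwd A B (WithLp.toLp 2 (x, Kc x)) =
      Matrix.toEuclideanCLM (n := Fin n) (𝕜 := ℝ) (A + B * K) x :=
    Mfwd_toLp_toEuclideanLin A B K x
  rw [mgauge_eq_gauge, mgauge_eq_gauge, hclosed]
  linarith [hdecrease x]
end
end
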